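/- arXiv:0810.1348 — 4 statements merged into one kernel-verified Lean document; each statement's English description precedes it below -/
import Mathlib

section
/- For the factorial Schur polynomial s_λ in n variables, one has s_{ρ_{n−1}}(t_1,...,t_n | t_1,−z_1,t_2,−z_2,...,t_{n−1},−z_{n−1}) = ∏_{1≤i<j≤n} (t_j + z_i), where ρ_{n−1} = (n−1, n−2, ..., 1, 0). -/
open Finset

private lemma prod_range_two_mul' {R : Type*} [CommRing R] (k : ℕ) (g : ℕ → R) :
    ∏ m ∈ Finset.range (2 * k), g m
      = ∏ l ∈ Finset.range k, (g (2 * l) * g (2 * l + 1)) := by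
  induction k with
  | zero => simp
  | succ k ih =>
      have : 2 * (k + 1) = (2 * k + 1) + 1 := by ring
      rw [this, Finset.prod_range_succ, Finset.prod_range_succ, ih,
        Finset.prod_range_succ]
      ring

/-- The main determinant identity, in nested-product form. -/
private lemma main_det {R : Type*} [CommRing R] (n : ℕ) (t z : ℕ → R) :
    Matrix.det (Matrix.of (fun i j : Fin n =>
        ∏ m ∈ Finset.range (2 * (n - 1 - (i : ℕ))),
          (t (j : ℕ) - (if m % 2 = 0 then t (m / 2) else -z (m / 2)))))
      =
      (∏ j : Fin n, ∏ m ∈ Finset.range (j : ℕ), (t m - t (j : ℕ)))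
        * ∏ j : Fin n, ∏ m ∈ Finset.range (j : ℕ), (t (j : ℕ) + z m) := by
  induction n with
  | zero => simp
  | succ n ih =>
      rw [Matrix.det_succ_row_zero]
      have hzero : ∀ j : Fin (n + 1), j ≠ Fin.last n →
          (Matrix.of (fun i j : Fin (n + 1) =>
            ∏ m ∈ Finset.range (2 * (n + 1 - 1 - (i : ℕ))),
              (t (j : ℕ) - (if m % 2 = 0 then t (m / 2) else -z (m / 2))))) 0 j = 0 := by
        intro j hj
        have hjn : (j : ℕ) < n := by
          have := j.isLt
          have hne : (j : ℕ) ≠ n := fun h => hj (Fin.ext h)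
          omega
        simp only [Matrix.of_apply]
        apply Finset.prod_eq_zero (i := 2 * (j : ℕ))
        · simp only [Finset.mem_range, Fin.val_zero]
          omega
        · simp [Nat.mul_mod_right, Nat.mul_div_cancel_left _ (by norm_num : 0 < 2)]
      rw [Finset.sum_eq_single (Fin.last n)]
      · -- the surviving term
        have hminor : ∀ i j : Fin n,
            (Matrix.of (fun i j : Fin (n + 1) =>
              ∏ m ∈ Finset.range (2 * (n + 1 - 1 - (i : ℕ))),
                (t (j : ℕ) - (if m % 2 = 0 then t (m / 2) else -z (m / 2))))).submatrix
              Fin.succ (Fin.last n).succAbove i j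
            = (Matrix.of (fun i j : Fin n =>
              ∏ m ∈ Finset.range (2 * (n - 1 - (i : ℕ))),
                (t (j : ℕ) - (if m % 2 = 0 then t (m / 2) else -z (m / 2))))) i j := by
          intro i j
          simp only [Matrix.submatrix_apply, Fin.succAbove_last, Matrix.of_apply,
            Fin.val_succ, Fin.coe_castSucc]
          congr 2
          omega
        have hdet : ((Matrix.of (fun i j : Fin (n + 1) =>
              ∏ m ∈ Finset.range (2 * (n + 1 - 1 - (i : ℕ))),
                (t (j : ℕ) - (if m % 2 = 0 then t (m / 2) else -z (m / 2))))).submatrix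
              Fin.succ (Fin.last n).succAbove).det
            = (∏ j : Fin n, ∏ m ∈ Finset.range (j : ℕ), (t m - t (j : ℕ)))
              * ∏ j : Fin n, ∏ m ∈ Finset.range (j : ℕ), (t (j : ℕ) + z m) := by
          rw [show ((Matrix.of (fun i j : Fin (n + 1) =>
              ∏ m ∈ Finset.range (2 * (n + 1 - 1 - (i : ℕ))),
                (t (j : ℕ) - (if m % 2 = 0 then t (m / 2) else -z (m / 2))))).submatrix
              Fin.succ (Fin.last n).succAbove)
            = (Matrix.of (fun i j : Fin n =>
              ∏ m ∈ Finset.range (2 * (n - 1 - (i : ℕ))),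
                (t (j : ℕ) - (if m % 2 = 0 then t (m / 2) else -z (m / 2))))) from
            Matrix.ext hminor]
          exact ih
        rw [hdet]
        -- compute the (0, last) entry
        have hentry : (Matrix.of (fun i j : Fin (n + 1) =>
              ∏ m ∈ Finset.range (2 * (n + 1 - 1 - (i : ℕ))),
                (t (j : ℕ) - (if m % 2 = 0 then t (m / 2) else -z (m / 2))))) 0 (Fin.last n)
            = (∏ l ∈ Finset.range n, (t n - t l))
              * ∏ l ∈ Finset.range n, (t n + z l) := by
          simp only [Matrix.of_apply, Fin.val_zero, Fin.val_last, Nat.sub_zero,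
            Nat.add_sub_cancel]
          rw [prod_range_two_mul', ← Finset.prod_mul_distrib]
          apply Finset.prod_congr rfl
          intro l _
          have h1 : (2 * l) % 2 = 0 := Nat.mul_mod_right 2 l
          have h2 : (2 * l) / 2 = l := Nat.mul_div_cancel_left l (by norm_num)
          have h3 : (2 * l + 1) % 2 = 1 := by omega
          have h4 : (2 * l + 1) / 2 = l := by omega
          rw [h1, h3, h2, h4]
          simp [sub_neg_eq_add]
        rw [hentry]
        -- split the (n+1)-products
        rw [Fin.prod_univ_castSucc (f := fun j : Fin (n + 1) =>
              ∏ m ∈ Finset.range (j : ℕ), (t m - t (j : ℕ))),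
            Fin.prod_univ_castSucc (f := fun j : Fin (n + 1) =>
              ∏ m ∈ Finset.range (j : ℕ), (t (j : ℕ) + z m))]
        simp only [Fin.coe_castSucc, Fin.val_last]
        have hsign : (-1 : R) ^ (n : ℕ) * ∏ l ∈ Finset.range n, (t n - t l)
            = ∏ l ∈ Finset.range n, (t l - t n) := by
          rw [show (-1 : R) ^ n = ∏ _l ∈ Finset.range n, (-1 : R) by simp,
            ← Finset.prod_mul_distrib]
          exact Finset.prod_congr rfl fun l _ => by ring
        calc (-1 : R) ^ n *
              ((∏ l ∈ Finset.range n, (t n - t l)) * ∏ l ∈ Finset.range n, (t n + z l)) *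
              ((∏ j : Fin n, ∏ m ∈ Finset.range (j : ℕ), (t m - t (j : ℕ)))
                * ∏ j : Fin n, ∏ m ∈ Finset.range (j : ℕ), (t (j : ℕ) + z m))
            = ((-1 : R) ^ n * ∏ l ∈ Finset.range n, (t n - t l))
                * (∏ l ∈ Finset.range n, (t n + z l))
                * ((∏ j : Fin n, ∏ m ∈ Finset.range (j : ℕ), (t m - t (j : ℕ)))
                  * ∏ j : Fin n, ∏ m ∈ Finset.range (j : ℕ), (t (j : ℕ) + z m)) := by ring
          _ = _ := by rw [hsign]; ring
      · intro j _ hj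
        rw [hzero j hj]
        ring
      · intro h
        exact absurd (Finset.mem_univ _) h

private lemma pair_prod {R : Type*} [CommRing R] (n : ℕ) (f : ℕ → ℕ → R) :
    ∏ p ∈ Finset.univ.filter (fun p : Fin n × Fin n => p.1 < p.2), f (p.1 : ℕ) (p.2 : ℕ)
      = ∏ j : Fin n, ∏ m ∈ Finset.range (j : ℕ), f m (j : ℕ) := by
  rw [Finset.prod_finset_product_right
      (Finset.univ.filter (fun p : Fin n × Fin n => p.1 < p.2))
      Finset.univ (fun j => Finset.univ.filter (fun i : Fin n => i < j))
      (by intro p; simp) (f := fun p => f (p.1 : ℕ) (p.2 : ℕ))]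
  apply Finset.prod_congr rfl
  intro j _
  apply Finset.prod_nbij' (fun i : Fin n => (i : ℕ))
    (fun m => if h : m < n then ⟨m, h⟩ else j)
  · intro i hi
    simp only [Finset.mem_filter, Finset.mem_univ, true_and] at hi
    simp only [Finset.mem_range]
    exact hi
  · intro m hm
    simp only [Finset.mem_range] at hm
    have hmn : m < n := lt_trans hm j.isLt
    simp only [dif_pos hmn, Finset.mem_filter, Finset.mem_univ, true_and]
    exact hm
  · intro i hi
    simp [i.isLt]
  · intro m hm
    simp only [Finset.mem_range] at hm
    have hmn : m < n := lt_trans hm j.isLt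
    simp [dif_pos hmn]
  · intro i _
    rfl

/-- `s_{ρ_{n-1}}(t_1,…,t_n | t_1,-z_1,t_2,-z_2,…,t_{n-1},-z_{n-1}) = ∏_{1≤i<j≤n} (t_j + z_i)`.
Here the factorial Schur polynomial `s_λ(x|a) = det((x_j|a)^{λ_i+n-i}) / ∏_{i<j}(x_i - x_j)`
is rendered with denominators cleared:  the determinant of the matrix
`((t_j|a)^{λ_i+n-i})` (with `λ = ρ_{n-1} = (n-1,…,1,0)`, so exponent `2(n-i)` in row `i`,
and parameter sequence `a = (t_1,-z_1,t_2,-z_2,…)`) equals the Vandermonde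
`∏_{i<j}(t_i - t_j)` times `∏_{i<j}(t_j + z_i)`.  Indices are 0-based:
`t k` stands for `t_{k+1}` and `z k` for `z_{k+1}`. -/
theorem stmt_2 {R : Type*} [CommRing R] (n : ℕ) (t z : ℕ → R) :
    Matrix.det (Matrix.of (fun i j : Fin n =>
        ∏ m ∈ Finset.range (2 * (n - 1 - (i : ℕ))),
          (t (j : ℕ) - (if m % 2 = 0 then t (m / 2) else -z (m / 2)))))
      =
      (∏ p ∈ Finset.univ.filter (fun p : Fin n × Fin n => p.1 < p.2),
          (t (p.1 : ℕ) - t (p.2 : ℕ)))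
        * ∏ p ∈ Finset.univ.filter (fun p : Fin n × Fin n => p.1 < p.2),
            (t (p.2 : ℕ) + z (p.1 : ℕ)) := by
  rw [pair_prod n (fun a b => t a - t b), pair_prod n (fun a b => t b + z a)]
  exact main_det n t z
end

section
/- Factorization formula: Q_{ρ_n + λ}(x_1,...,x_n | t) = ∏_{i=1}^n 2x_i · ∏_{1≤i<j≤n}(x_i + x_j) · s_λ(x_1,...,x_n | t), where ρ_n = (n, n−1, ..., 1) and λ = (λ_1 ≥ ... ≥ λ_n ≥ 0) is a partition. -/
/-! The factors `∏ x_i` and `∏_{i<j} (x_i + x_j)` are symmetric in the `x_i`, so they can be pulled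
out of every summand of the symmetrization; what remains is the summand of `s_λ(x|t)`. -/

open Finset

theorem prod_filter_lt_equiv_of_symm {α β M : Type*} [LinearOrder α] [LinearOrder β]
    [Fintype α] [Fintype β] [CommMonoid M] (e : α ≃ β) (f : β → β → M)
    (hf : ∀ a b, f a b = f b a) :
    ∏ p ∈ univ.filter (fun p : α × α => p.1 < p.2), f (e p.1) (e p.2)
      = ∏ q ∈ univ.filter (fun q : β × β => q.1 < q.2), f q.1 q.2 := by
  refine prod_nbij' (fun p => if e p.1 < e p.2 then (e p.1, e p.2) else (e p.2, e p.1))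
    (fun q => if e.symm q.1 < e.symm q.2 then (e.symm q.1, e.symm q.2)
      else (e.symm q.2, e.symm q.1)) ?_ ?_ ?_ ?_ ?_
  all_goals intro p hp
  all_goals grind [Equiv.apply_eq_iff_eq, Equiv.symm_apply_apply, Equiv.apply_symm_apply]

theorem stmt_4_general {F : Type*} [Field F] (n : ℕ) (x : Fin n → F) (t : ℕ → F)
    (lam : ℕ → ℕ) :
    (2 : F) ^ n * ∑ w : Equiv.Perm (Fin n),
        (∏ i : Fin n,
            (x (w i) * ∏ m ∈ Finset.range (lam (i : ℕ) + (n - 1 - (i : ℕ))), (x (w i) - t m)))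
          * ∏ p ∈ Finset.univ.filter (fun p : Fin n × Fin n => p.1 < p.2),
              ((x (w p.1) + x (w p.2)) / (x (w p.1) - x (w p.2)))
      =
      (∏ i : Fin n, 2 * x i)
        * (∏ p ∈ Finset.univ.filter (fun p : Fin n × Fin n => p.1 < p.2), (x p.1 + x p.2))
        * ∑ w : Equiv.Perm (Fin n),
            (∏ i : Fin n, ∏ m ∈ Finset.range (lam (i : ℕ) + (n - 1 - (i : ℕ))), (x (w i) - t m))
              * ∏ p ∈ Finset.univ.filter (fun p : Fin n × Fin n => p.1 < p.2),
                  (x (w p.1) - x (w p.2))⁻¹ := by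
  have hsym (w : Equiv.Perm (Fin n)) :
      ∏ p ∈ univ.filter (fun p : Fin n × Fin n => p.1 < p.2), (x (w p.1) + x (w p.2))
        = ∏ p ∈ univ.filter (fun p : Fin n × Fin n => p.1 < p.2), (x p.1 + x p.2) :=
    prod_filter_lt_equiv_of_symm w (fun a b => x a + x b) fun _ _ => add_comm _ _
  rw [prod_mul_distrib, prod_const, card_univ, Fintype.card_fin, mul_sum, mul_sum]
  refine sum_congr rfl fun w _ => ?_
  simp only [div_eq_mul_inv, prod_mul_distrib, hsym, Equiv.prod_comp w x]
  ring

/-- Factorization formula: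
`Q_{ρ_n+λ}(x_1,…,x_n|t) = ∏_i 2x_i · ∏_{i<j}(x_i+x_j) · s_λ(x_1,…,x_n|t)`.
The factorial `Q`-Schur polynomial is written out via Ivanov's formula
`Q_{ρ_n+λ} = 2^n ∑_{w∈S_n} w[∏_i x_i (x_i|t)^{λ_i+n-i} ∏_{i<j}(x_i+x_j)/(x_i-x_j)]`
and `s_λ(x|t) = ∑_{w∈S_n} w[∏_i (x_i|t)^{λ_i+n-i} ∏_{i<j}(x_i-x_j)^{-1}]`,
with `(x|t)^k = (x-t_1)⋯(x-t_k)`; we work in a field with the `x_i` pairwise distinct.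
Indices are 0-based: `lam i` is `λ_{i+1}`, `t m` is `t_{m+1}`. -/
theorem stmt_4 {F : Type*} [Field F] (n : ℕ) (x : Fin n → F) (t : ℕ → F)
    (lam : ℕ → ℕ) (hlam : Antitone lam) (hx : Function.Injective x) :
    (2 : F) ^ n * ∑ w : Equiv.Perm (Fin n),
        (∏ i : Fin n,
            (x (w i) * ∏ m ∈ Finset.range (lam (i : ℕ) + (n - 1 - (i : ℕ))), (x (w i) - t m)))
          * ∏ p ∈ Finset.univ.filter (fun p : Fin n × Fin n => p.1 < p.2),
              ((x (w p.1) + x (w p.2)) / (x (w p.1) - x (w p.2)))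
      =
      (∏ i : Fin n, 2 * x i)
        * (∏ p ∈ Finset.univ.filter (fun p : Fin n × Fin n => p.1 < p.2), (x p.1 + x p.2))
        * ∑ w : Equiv.Perm (Fin n),
            (∏ i : Fin n, ∏ m ∈ Finset.range (lam (i : ℕ) + (n - 1 - (i : ℕ))), (x (w i) - t m))
              * ∏ p ∈ Finset.univ.filter (fun p : Fin n × Fin n => p.1 < p.2),
                  (x (w p.1) - x (w p.2))⁻¹ :=
  stmt_4_general n x t lam
end

section
/- Factorization formula in even rank: for n even and λ a partition with at most n parts, P_{ρ_{n−1}+λ}(x_1,...,x_n | t) = ∏_{1≤i<j≤n}(x_i + x_j) · s_λ(x_1,...,x_n | t). -/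
/-!
The factor `∏_{i<j} (x_i + x_j)` is a symmetric function of the `x_i`, so every permutation `w`
fixes it and it can be pulled out of each summand of `P_{ρ_{n-1}+λ}`; what remains of the
summand for `w` is the summand for `w` in `s_λ(x|t)`.
-/

open Finset

namespace Finset

variable {α M : Type*} [LinearOrder α] [Fintype α] [CommMonoid M]

theorem prod_filter_lt_eq_prod_filter_not_isDiag (g : Sym2 α → M) :
    ∏ q ∈ (univ : Finset (α × α)) with q.1 < q.2, g s(q.1, q.2) =
      ∏ z ∈ univ with ¬z.IsDiag, g z := by
  apply Additive.ofMul.injective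
  have h := sum_sym2_filter_not_isDiag (M := Additive M) univ (fun z => Additive.ofMul (g z))
  rw [sym2_univ] at h
  simp only [ofMul_prod, h]
  exact sum_congr (by ext; simp [lt_iff_le_and_ne]) fun _ _ => rfl

theorem prod_filter_lt_comp_perm (g : α → α → M) (hg : ∀ a b, g a b = g b a)
    (w : Equiv.Perm α) :
    ∏ q ∈ (univ : Finset (α × α)) with q.1 < q.2, g (w q.1) (w q.2) =
      ∏ q ∈ (univ : Finset (α × α)) with q.1 < q.2, g q.1 q.2 := by
  set G : Sym2 α → M := Sym2.lift ⟨g, hg⟩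
  have hbij : (Sym2.map w).Bijective :=
    Finite.injective_iff_bijective.mp (Sym2.map.injective w.injective)
  calc ∏ q ∈ (univ : Finset (α × α)) with q.1 < q.2, g (w q.1) (w q.2)
      = ∏ z ∈ (univ : Finset (Sym2 α)) with ¬z.IsDiag, G (z.map w) :=
        prod_filter_lt_eq_prod_filter_not_isDiag (fun z => G (z.map w))
    _ = ∏ z ∈ (univ : Finset (Sym2 α)) with ¬z.IsDiag, G z :=
        prod_bijective _ hbij (by simp [Sym2.isDiag_map w.injective]) fun _ _ => rfl
    _ = ∏ q ∈ (univ : Finset (α × α)) with q.1 < q.2, g q.1 q.2 :=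
        (prod_filter_lt_eq_prod_filter_not_isDiag G).symm

end Finset

theorem stmt_5_general {F : Type*} [Field F] (n : ℕ) (x : Fin n → F) (t : ℕ → F)
    (lam : ℕ → ℕ) :
    ∑ w : Equiv.Perm (Fin n),
        (∏ i : Fin n, ∏ m ∈ Finset.range ((n - 1 - (i : ℕ)) + lam (i : ℕ)), (x (w i) - t m))
          * ∏ p ∈ Finset.univ.filter (fun p : Fin n × Fin n => p.1 < p.2),
              ((x (w p.1) + x (w p.2)) / (x (w p.1) - x (w p.2)))
      =
      (∏ p ∈ Finset.univ.filter (fun p : Fin n × Fin n => p.1 < p.2), (x p.1 + x p.2))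
        * ∑ w : Equiv.Perm (Fin n),
            (∏ i : Fin n, ∏ m ∈ Finset.range (lam (i : ℕ) + (n - 1 - (i : ℕ))), (x (w i) - t m))
              * ∏ p ∈ Finset.univ.filter (fun p : Fin n × Fin n => p.1 < p.2),
                  (x (w p.1) - x (w p.2))⁻¹ := by
  rw [mul_sum]
  refine sum_congr rfl fun w _ => ?_
  have hsym := prod_filter_lt_comp_perm (fun i j => x i + x j) (fun _ _ => add_comm _ _) w
  simp only [prod_div_distrib, prod_inv_distrib, Nat.add_comm (lam _)] at hsym ⊢
  rw [hsym]
  ring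

/-- Factorization formula in even rank: for `n` even and `λ` a partition with at most
`n` parts, `P_{ρ_{n-1}+λ}(x_1,…,x_n|t) = ∏_{i<j}(x_i+x_j) · s_λ(x_1,…,x_n|t)`.
Here `μ = ρ_{n-1}+λ` has `r = n` parts `μ_i = n-i+λ_i`, so Ivanov's formula reads
`P_μ = ∑_{w∈S_n} w[∏_i (x_i|t)^{μ_i} ∏_{i<j}(x_i+x_j)/(x_i-x_j)]`, and
`s_λ(x|t) = ∑_{w∈S_n} w[∏_i (x_i|t)^{λ_i+n-i} ∏_{i<j}(x_i-x_j)^{-1}]`, with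
`(x|t)^k = (x-t_1)⋯(x-t_k)`; we work in a field with the `x_i` pairwise distinct.
Indices are 0-based: `lam i` is `λ_{i+1}`, `t m` is `t_{m+1}`. -/
theorem stmt_5 {F : Type*} [Field F] (n : ℕ) (hn : Even n) (x : Fin n → F) (t : ℕ → F)
    (lam : ℕ → ℕ) (hlam : Antitone lam) (hx : Function.Injective x) :
    ∑ w : Equiv.Perm (Fin n),
        (∏ i : Fin n, ∏ m ∈ Finset.range ((n - 1 - (i : ℕ)) + lam (i : ℕ)), (x (w i) - t m))
          * ∏ p ∈ Finset.univ.filter (fun p : Fin n × Fin n => p.1 < p.2),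
              ((x (w p.1) + x (w p.2)) / (x (w p.1) - x (w p.2)))
      =
      (∏ p ∈ Finset.univ.filter (fun p : Fin n × Fin n => p.1 < p.2), (x p.1 + x p.2))
        * ∑ w : Equiv.Perm (Fin n),
            (∏ i : Fin n, ∏ m ∈ Finset.range (lam (i : ℕ) + (n - 1 - (i : ℕ))), (x (w i) - t m))
              * ∏ p ∈ Finset.univ.filter (fun p : Fin n × Fin n => p.1 < p.2),
                  (x (w p.1) - x (w p.2))⁻¹ :=
  stmt_5_general n x t lam
end

section
/- For n odd and λ a partition with at most n−1 parts, P_{ρ_{n−1}+λ}(x_1,...,x_{n−1} | t) = ∏_{1≤i<j≤n−1}(x_i + x_j) · s_{λ+1^{n−1}}(x_1,...,x_{n−1} | t). -/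
/-!
The factor `∏_{i<j} (x_i + x_j)` of Ivanov's summand is symmetric, so it comes out of the
symmetrization; what remains is the summand of `s_{λ+1^{n-1}}`, because
`ρ_{n-1} + λ = (λ + 1^{n-1}) + δ_{n-1}` with `δ_{n-1} = (n-2, …, 1, 0)`.
-/

open Finset

theorem Finset.prod_filter_lt_comp_perm_of_symm {ι M : Type*} [Fintype ι] [LinearOrder ι]
    [CommMonoid M] (f : ι → ι → M) (hf : ∀ i j, f i j = f j i) (σ : Equiv.Perm ι) :
    ∏ p ∈ univ.filter (fun p : ι × ι => p.1 < p.2), f (σ p.1) (σ p.2)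
      = ∏ p ∈ univ.filter (fun p : ι × ι => p.1 < p.2), f p.1 p.2 := by
  have sort_mem (τ : Equiv.Perm ι) {a b : ι} (hab : a < b) : τ a ⊓ τ b < τ a ⊔ τ b :=
    inf_lt_sup.mpr (τ.injective.ne hab.ne)
  have sort_inv_sort (τ : Equiv.Perm ι) {a b : ι} (hab : a < b) :
      (τ.symm (τ a ⊓ τ b) ⊓ τ.symm (τ a ⊔ τ b), τ.symm (τ a ⊓ τ b) ⊔ τ.symm (τ a ⊔ τ b))
        = (a, b) := by
    rcases le_total (τ a) (τ b) with h | h <;> simp [h, hab.le]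
  refine prod_nbij' (fun p => (σ p.1 ⊓ σ p.2, σ p.1 ⊔ σ p.2))
    (fun q => (σ.symm q.1 ⊓ σ.symm q.2, σ.symm q.1 ⊔ σ.symm q.2)) ?_ ?_ ?_ ?_ ?_
  · intro p hp
    simp only [mem_filter, mem_univ, true_and] at hp ⊢
    exact sort_mem σ hp
  · intro q hq
    simp only [mem_filter, mem_univ, true_and] at hq ⊢
    simpa using sort_mem σ.symm hq
  · intro p hp
    simp only [mem_filter, mem_univ, true_and] at hp ⊢
    exact sort_inv_sort σ hp
  · intro q hq
    simp only [mem_filter, mem_univ, true_and] at hq ⊢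
    simpa using sort_inv_sort σ.symm hq
  · intro p _
    rcases le_total (σ p.1) (σ p.2) with h | h <;> simp [h, hf]

theorem stmt_6_general {F : Type*} [Field F] (n : ℕ) (x : Fin (n - 1) → F) (t : ℕ → F)
    (lam : ℕ → ℕ) :
    ∑ w : Equiv.Perm (Fin (n - 1)),
        (∏ i : Fin (n - 1),
            ∏ m ∈ Finset.range ((n - 1 - (i : ℕ)) + lam (i : ℕ)), (x (w i) - t m))
          * ∏ p ∈ Finset.univ.filter (fun p : Fin (n - 1) × Fin (n - 1) => p.1 < p.2),
              ((x (w p.1) + x (w p.2)) / (x (w p.1) - x (w p.2)))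
      =
      (∏ p ∈ Finset.univ.filter (fun p : Fin (n - 1) × Fin (n - 1) => p.1 < p.2),
          (x p.1 + x p.2))
        * ∑ w : Equiv.Perm (Fin (n - 1)),
            (∏ i : Fin (n - 1),
                ∏ m ∈ Finset.range ((lam (i : ℕ) + 1) + (n - 2 - (i : ℕ))), (x (w i) - t m))
              * ∏ p ∈ Finset.univ.filter (fun p : Fin (n - 1) × Fin (n - 1) => p.1 < p.2),
                  (x (w p.1) - x (w p.2))⁻¹ := by
  have same_degree (i : Fin (n - 1)) : n - 1 - i + lam i = lam i + 1 + (n - 2 - i) := by omega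
  have sym_factor (w : Equiv.Perm (Fin (n - 1))) :=
    prod_filter_lt_comp_perm_of_symm (fun i j => x i + x j) (fun i j => add_comm (x i) (x j)) w
  rw [mul_sum]
  refine sum_congr rfl fun w _ => ?_
  simp only [same_degree, div_eq_mul_inv, prod_mul_distrib, sym_factor]
  ring

/-- For `n` odd and `λ` a partition with at most `n-1` parts,
`P_{ρ_{n-1}+λ}(x_1,…,x_{n-1}|t) = ∏_{1≤i<j≤n-1}(x_i+x_j) · s_{λ+1^{n-1}}(x_1,…,x_{n-1}|t)`.
Here `μ = ρ_{n-1}+λ` has `m = n-1` parts `μ_i = n-i+λ_i`, Ivanov's formula reads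
`P_μ = ∑_{w∈S_m} w[∏_i (x_i|t)^{μ_i} ∏_{i<j}(x_i+x_j)/(x_i-x_j)]`, and
`s_{λ+1^{m}}(x|t) = ∑_{w∈S_m} w[∏_i (x_i|t)^{(λ_i+1)+m-i} ∏_{i<j}(x_i-x_j)^{-1}]`,
with `(x|t)^k = (x-t_1)⋯(x-t_k)`; we work in a field with the `x_i` pairwise distinct.
Indices are 0-based: `lam i` is `λ_{i+1}`, `t m` is `t_{m+1}`. -/
theorem stmt_6 {F : Type*} [Field F] (n : ℕ) (hn : Odd n) (x : Fin (n - 1) → F) (t : ℕ → F)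
    (lam : ℕ → ℕ) (hlam : Antitone lam) (hx : Function.Injective x) :
    ∑ w : Equiv.Perm (Fin (n - 1)),
        (∏ i : Fin (n - 1),
            ∏ m ∈ Finset.range ((n - 1 - (i : ℕ)) + lam (i : ℕ)), (x (w i) - t m))
          * ∏ p ∈ Finset.univ.filter (fun p : Fin (n - 1) × Fin (n - 1) => p.1 < p.2),
              ((x (w p.1) + x (w p.2)) / (x (w p.1) - x (w p.2)))
      =
      (∏ p ∈ Finset.univ.filter (fun p : Fin (n - 1) × Fin (n - 1) => p.1 < p.2),
          (x p.1 + x p.2))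
        * ∑ w : Equiv.Perm (Fin (n - 1)),
            (∏ i : Fin (n - 1),
                ∏ m ∈ Finset.range ((lam (i : ℕ) + 1) + (n - 2 - (i : ℕ))), (x (w i) - t m))
              * ∏ p ∈ Finset.univ.filter (fun p : Fin (n - 1) × Fin (n - 1) => p.1 < p.2),
                  (x (w p.1) - x (w p.2))⁻¹ :=
  stmt_6_general n x t lam
end
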